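/- For t ≥ 5 and n ≥ t, sat(n, B(S_t)) = t - 1 = |E(S_t)|. -/

import Mathlib

open Finset

/-- A hypergraph `H` on `[n]` contains a Berge-`S_t` subhypergraph (`S_t` is the star on `t`
vertices): there are `t - 1` distinct hyperedges `E k` of `H` and distinct vertices
`c, v 1, …, v (t-1)` with `{c, v k} ⊆ E k` for every `k`. -/
def HasBergeStar (t n : ℕ) (H : Finset (Finset (Fin n))) : Prop :=
  ∃ (E : Fin (t - 1) → Finset (Fin n)) (c : Fin n) (v : Fin (t - 1) → Fin n),
    Function.Injective E ∧ Function.Injective v ∧ (∀ k, v k ≠ c) ∧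
      ∀ k, E k ∈ H ∧ c ∈ E k ∧ v k ∈ E k

/-- `H` (with all hyperedges of size at least 2) is Berge-`S_t` saturated: it contains no
Berge-`S_t` subhypergraph, but adding any new hyperedge of size at least 2 creates one. -/
def StarSat (t n : ℕ) (H : Finset (Finset (Fin n))) : Prop :=
  (∀ e ∈ H, 2 ≤ e.card) ∧ ¬ HasBergeStar t n H ∧
    ∀ e : Finset (Fin n), e ∉ H → 2 ≤ e.card → HasBergeStar t n (insert e H)

/-- The hypergraph `H_t(n)` on `[n]` with hyperedges `[n]`, `[n] \ {i}` for `i ∈ [t-3]`,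
and `[t-3]`. -/
def Ht (t n : ℕ) : Finset (Finset (Fin n)) :=
  insert (Finset.univ.filter (fun i : Fin n => (i : ℕ) < t - 3))
    (insert Finset.univ
      ((Finset.univ.filter (fun i : Fin n => (i : ℕ) < t - 3)).image
        (fun i => Finset.univ.erase i)))

/-!
Lower bound: if `H` is saturated and has fewer than `t - 1` hyperedges, adding a missing pair
`{a, b}` creates a Berge star, which then has to use every hyperedge, so `a` or `b` lies in every
hyperedge of `H`. Pick `x` outside some hyperedge: for a missing pair `{x, w}` it is `w` that lies
in every hyperedge. Counting gives one such `y`, and then every pair `{x, w}` with `w ≠ y` misses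
`y`, so is missing too. Hence every hyperedge contains `[n] \ {x}`, leaving at most two of them.

Upper bound: a Berge star in `H_t(n)` would use all `t - 1` hyperedges, and its centre would lie in
`[t - 3]` and in `[n] \ {centre}`. After adding a hyperedge `e`, centre a star at a vertex `c` of
`e` and use `e`, `[t - 3]` (if `c ∈ [t - 3]`), the hyperedges `[n] \ {i}` with `i ≠ c` and `[n]`;
leaves are chosen greedily, each hyperedge being larger than the number of leaves already used
(which is why `[n]` comes last).
-/

section BergeStar

variable {α : Type*} {c : α} {s u : Finset α} {F G : Finset (Finset α)}

def IsBergeStar (c : α) (F : Finset (Finset α)) : Prop :=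
  ∃ leaf : Finset α → α, Set.InjOn leaf F ∧ ∀ s ∈ F, c ∈ s ∧ leaf s ∈ s ∧ leaf s ≠ c

lemma isBergeStar_empty (c : α) : IsBergeStar c ∅ :=
  ⟨fun _ => c, by simp, by simp⟩

variable [DecidableEq α]

lemma isBergeStar_pair (hsu : s ≠ u) (hcs : c ∈ s) (hcu : c ∈ u) (hs : 2 ≤ s.card)
    (hu : 2 ≤ u.card) : IsBergeStar c {s, u} := by
  have hs' : (s.erase c).Nonempty := by rw [← card_pos, card_erase_of_mem hcs]; omega
  have hu' : (u.erase c).Nonempty := by rw [← card_pos, card_erase_of_mem hcu]; omega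
  obtain ⟨x, hx, y, hy, hxy⟩ : ∃ x ∈ s.erase c, ∃ y ∈ u.erase c, x ≠ y := by
    by_contra! h
    obtain ⟨x, hx⟩ := id hs'
    obtain ⟨y, hy⟩ := id hu'
    apply hsu
    rw [← insert_erase hcs, ← insert_erase hcu,
      hs'.subset_singleton_iff.1 fun z hz => mem_singleton.2 (h z hz y hy),
      hu'.subset_singleton_iff.1 fun z hz => mem_singleton.2 (h x hx z hz).symm, h x hx y hy]
  rw [mem_erase] at hx hy
  refine ⟨fun r => if r = s then x else y, ?_, ?_⟩
  · rw [coe_pair, Set.injOn_pair]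
    simp [hsu.symm, hxy]
  · simp [hsu.symm, hcs, hcu, hx, hy]

lemma IsBergeStar.insert_of_card_lt (hF : IsBergeStar c F) (hcs : c ∈ s)
    (hs : (insert s F).card < s.card) : IsBergeStar c (insert s F) := by
  by_cases hsF : s ∈ F
  · rwa [insert_eq_of_mem hsF]
  obtain ⟨leaf, hinj, hleaf⟩ := hF
  rw [card_insert_of_notMem hsF] at hs
  obtain ⟨z, hzs, hz⟩ : ∃ z ∈ s, z ∉ insert c (F.image leaf) :=
    exists_mem_notMem_of_card_lt_card ((card_insert_le _ _).trans_lt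
      (by have := card_image_le (s := F) (f := leaf); omega))
  rw [mem_insert, mem_image, not_or, not_exists] at hz
  have hupdate : ∀ r ∈ F, Function.update leaf s z r = leaf r := fun r hr =>
    Function.update_of_ne (ne_of_mem_of_not_mem hr hsF) _ _
  refine ⟨Function.update leaf s z, ?_, ?_⟩
  · rw [coe_insert, Set.injOn_insert (by exact_mod_cast hsF)]
    refine ⟨fun r hr r' hr' h => hinj hr hr' ?_, ?_⟩
    · rwa [hupdate r hr, hupdate r' hr'] at h
    · rintro ⟨r, hr, h⟩
      rw [hupdate r hr, Function.update_self] at h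
      exact hz.2 r ⟨hr, h⟩
  · intro r hr
    rcases mem_insert.1 hr with rfl | hr
    · rw [Function.update_self]
      exact ⟨hcs, hzs, hz.1⟩
    · rw [hupdate r hr]
      exact hleaf r hr

lemma IsBergeStar.union (hF : IsBergeStar c F) (hG : ∀ s ∈ G, c ∈ s ∧ (F ∪ G).card < s.card) :
    IsBergeStar c (F ∪ G) := by
  induction G using Finset.induction_on with
  | empty => simpa using hF
  | insert s G _ ih =>
    rw [union_insert] at hG ⊢
    obtain ⟨hcs, hs⟩ := hG s (mem_insert_self _ _)
    refine (ih fun r hr => ?_).insert_of_card_lt hcs hs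
    obtain ⟨hcr, hr⟩ := hG r (mem_insert_of_mem hr)
    exact ⟨hcr, (card_le_card (subset_insert _ _)).trans_lt hr⟩

lemma IsBergeStar.insert_univ_union_image_erase [Fintype α] {B : Finset α} (hF : IsBergeStar c F)
    (hcB : c ∉ B) (hcard : F.card + B.card + 1 < Fintype.card α) :
    IsBergeStar c (insert univ (F ∪ B.image univ.erase)) := by
  have hunion : (F ∪ B.image univ.erase).card ≤ F.card + B.card :=
    (card_union_le _ _).trans (Nat.add_le_add_left card_image_le _)
  refine (hF.union fun s hs => ?_).insert_of_card_lt (mem_univ c) ?_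
  · obtain ⟨b, hb, rfl⟩ := mem_image.1 hs
    rw [card_erase_of_mem (mem_univ b), card_univ]
    exact ⟨mem_erase.2 ⟨ne_of_mem_of_not_mem hb hcB |>.symm, mem_univ c⟩, by omega⟩
  · rw [card_univ]
    exact (card_insert_le _ _).trans_lt (by omega)

end BergeStar

lemma hasBergeStar_iff {t n : ℕ} {H : Finset (Finset (Fin n))} :
    HasBergeStar t n H ↔ ∃ c F, F ⊆ H ∧ t - 1 ≤ F.card ∧ IsBergeStar c F := by
  constructor
  · rintro ⟨E, c, v, hE, hv, hvc, hmem⟩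
    refine ⟨c, univ.image E, image_subset_iff.2 fun k _ => (hmem k).1, by
      rw [card_image_of_injective _ hE, card_univ, Fintype.card_fin],
      Function.extend E v fun _ => c, ?_, ?_⟩
    · rw [coe_image]
      rintro _ ⟨k, -, rfl⟩ _ ⟨k', -, rfl⟩ h
      rw [hE.extend_apply, hE.extend_apply] at h
      rw [hv h]
    · simp only [mem_image, mem_univ, true_and, forall_exists_index, forall_apply_eq_imp_iff]
      intro k
      rw [hE.extend_apply]
      exact ⟨(hmem k).2.1, (hmem k).2.2, hvc k⟩
  · rintro ⟨c, F, hFH, hF, leaf, hinj, hleaf⟩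
    obtain ⟨F', hF'F, hF'⟩ := exists_subset_card_eq hF
    let E : Fin (t - 1) → Finset (Fin n) := fun k => ((F'.equivFinOfCardEq hF').symm k : _)
    have hEF : ∀ k, E k ∈ F := fun k => hF'F ((F'.equivFinOfCardEq hF').symm k).2
    refine ⟨E, c, fun k => leaf (E k), Subtype.val_injective.comp (Equiv.injective _),
      fun k k' h => ?_, fun k => (hleaf _ (hEF k)).2.2,
      fun k => ⟨hFH (hEF k), (hleaf _ (hEF k)).1, (hleaf _ (hEF k)).2.1⟩⟩
    exact (F'.equivFinOfCardEq hF').symm.injective (Subtype.ext (hinj (hEF k) (hEF k') h))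

lemma HasBergeStar.exists_common_vertex {t n : ℕ} {H : Finset (Finset (Fin n))}
    (h : HasBergeStar t n H) (hH : H.card ≤ t - 1) : H.card = t - 1 ∧ ∃ c, ∀ s ∈ H, c ∈ s := by
  obtain ⟨c, F, hFH, hF, _, -, hleaf⟩ := hasBergeStar_iff.1 h
  obtain rfl : F = H := eq_of_subset_of_card_le hFH (by omega)
  exact ⟨by omega, c, fun s hs => (hleaf s hs).1⟩

section LowerBound

variable {α : Type*} [Fintype α] [DecidableEq α]

lemma exists_pair_notMem (H : Finset (Finset α)) (hH : H.card + 1 < Fintype.card α) (x : α) :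
    ∃ y ≠ x, {x, y} ∉ H := by
  by_contra! h
  have hinj : Set.InjOn (fun y => ({x, y} : Finset α)) (univ.erase x) := by
    intro y hy y' hy' hyy'
    have : y ∈ ({x, y'} : Finset α) := by simp only at hyy'; simp [← hyy']
    exact (mem_insert.1 this).resolve_left (ne_of_mem_erase hy) |> mem_singleton.1
  have := card_le_card_of_injOn _ (fun y hy => h y (ne_of_mem_erase hy)) hinj
  rw [card_erase_of_mem (mem_univ x), card_univ] at this
  omega

lemma card_le_two_of_forall_erase_subset {H : Finset (Finset α)} (x : α)
    (h : ∀ s ∈ H, univ.erase x ⊆ s) : H.card ≤ 2 := by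
  have hsub : H ⊆ {univ, univ.erase x} := by
    intro s hs
    by_cases hxs : x ∈ s
    · exact mem_insert.2 (Or.inl (eq_univ_of_forall fun w =>
        if hw : w = x then hw ▸ hxs else h s hs (mem_erase.2 ⟨hw, mem_univ w⟩)))
    · refine mem_insert_of_mem (mem_singleton.2 (Subset.antisymm (fun w hw => ?_) (h s hs)))
      exact mem_erase.2 ⟨ne_of_mem_of_not_mem hw hxs, mem_univ w⟩
  exact (card_le_card hsub).trans (card_insert_le _ _)

end LowerBound

section Saturation

variable {t n : ℕ} {H : Finset (Finset (Fin n))}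

lemma StarSat.mem_all_of_pair_notMem (hH : StarSat t n H) (hcard : H.card < t - 1) {a b : Fin n}
    (hab : a ≠ b) (hp : {a, b} ∉ H) :
    H.card = t - 2 ∧ ((∀ s ∈ H, a ∈ s) ∨ ∀ s ∈ H, b ∈ s) := by
  have hstar := hH.2.2 _ hp (card_pair hab).ge
  obtain ⟨hcard', c, hc⟩ := hstar.exists_common_vertex (by rw [card_insert_of_notMem hp]; omega)
  refine ⟨by rw [card_insert_of_notMem hp] at hcard'; omega, ?_⟩
  have hsub : ∀ s ∈ H, c ∈ s := fun s hs => hc s (mem_insert_of_mem hs)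
  rcases mem_insert.1 (hc _ (mem_insert_self _ _)) with rfl | hcb
  · exact Or.inl hsub
  · exact Or.inr (mem_singleton.1 hcb ▸ hsub)

lemma StarSat.le_card (ht : 5 ≤ t) (hn : t ≤ n) (hH : StarSat t n H) : t - 1 ≤ H.card := by
  by_contra! hlt
  have hcard' : H.card + 1 < Fintype.card (Fin n) := by rw [Fintype.card_fin]; omega
  obtain ⟨y, hy, hp⟩ := exists_pair_notMem H hcard' ⟨0, by omega⟩
  have hcard : H.card = t - 2 := (hH.mem_all_of_pair_notMem hlt hy.symm hp).1
  obtain ⟨x, s₀, hs₀, hx⟩ : ∃ x, ∃ s₀ ∈ H, x ∉ s₀ := by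
    by_contra! h
    have := card_le_two_of_forall_erase_subset (H := H) ⟨0, by omega⟩ fun s hs w _ => h w s hs
    omega
  have hforced : ∀ w ≠ x, {x, w} ∉ H → ∀ s ∈ H, w ∈ s := fun w hw hp =>
    (hH.mem_all_of_pair_notMem hlt hw.symm hp).2.resolve_left fun h => hx (h s₀ hs₀)
  obtain ⟨y, hyx, hpy⟩ := exists_pair_notMem H hcard' x
  have hy : ∀ s ∈ H, y ∈ s := hforced y hyx hpy
  have hall : ∀ s ∈ H, univ.erase x ⊆ s := by
    intro s hs w hw
    obtain rfl | hwy := eq_or_ne w y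
    · exact hy s hs
    refine hforced w (ne_of_mem_erase hw) (fun hxw => ?_) s hs
    rcases mem_insert.1 (hy _ hxw) with h | h
    · exact hyx h
    · exact hwy (mem_singleton.1 h).symm
  have := card_le_two_of_forall_erase_subset x hall
  omega

/-- The vertex set `[t - 3]` of `Ht t n`. -/
def smallVertices (t n : ℕ) : Finset (Fin n) :=
  univ.filter fun i : Fin n => (i : ℕ) < t - 3

lemma card_smallVertices (h : t - 3 ≤ n) : (smallVertices t n).card = t - 3 := by
  rw [smallVertices, Fin.card_filter_val_lt]
  omega

lemma mem_Ht {s : Finset (Fin n)} :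
    s ∈ Ht t n ↔ s = smallVertices t n ∨ s = univ ∨ ∃ i ∈ smallVertices t n, univ.erase i = s := by
  simp only [Ht, smallVertices, mem_insert, mem_image]

lemma card_univ_erase (i : Fin n) : (univ.erase i).card = n - 1 := by
  rw [card_erase_of_mem (mem_univ i), card_univ, Fintype.card_fin]

lemma card_Ht (ht : 3 ≤ t) (hn : t ≤ n) : (Ht t n).card = t - 1 := by
  have hA := card_smallVertices (t := t) (n := n) (by omega)
  have huniv : univ ∉ (smallVertices t n).image univ.erase := by
    simp only [mem_image, not_exists, not_and]
    intro i _ h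
    have := congrArg card h
    rw [card_univ_erase, card_univ, Fintype.card_fin] at this
    omega
  have hsmall : smallVertices t n ∉ insert univ ((smallVertices t n).image univ.erase) := by
    simp only [mem_insert, mem_image, not_or, not_exists, not_and]
    refine ⟨fun h => ?_, fun i _ h => ?_⟩
    · have := congrArg card h
      rw [hA, card_univ, Fintype.card_fin] at this
      omega
    · have := congrArg card h
      rw [hA, card_univ_erase] at this
      omega
  rw [Ht, ← smallVertices, card_insert_of_notMem hsmall, card_insert_of_notMem huniv,
    card_image_of_injOn ((erase_injOn univ).mono (by simp)), hA]
  omega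

lemma two_le_card_of_mem_Ht (ht : 5 ≤ t) (hn : t ≤ n) {s : Finset (Fin n)} (hs : s ∈ Ht t n) :
    2 ≤ s.card := by
  rcases mem_Ht.1 hs with rfl | rfl | ⟨i, -, rfl⟩
  · rw [card_smallVertices (by omega)]; omega
  · rw [card_univ, Fintype.card_fin]; omega
  · rw [card_univ_erase]; omega

lemma not_hasBergeStar_Ht (ht : 3 ≤ t) (hn : t ≤ n) : ¬ HasBergeStar t n (Ht t n) := by
  intro h
  obtain ⟨-, c, hc⟩ := h.exists_common_vertex (card_Ht ht hn).le
  have hcA : c ∈ smallVertices t n := hc _ (mem_Ht.2 (Or.inl rfl))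
  exact (mem_erase.1 (hc _ (mem_Ht.2 (Or.inr (Or.inr ⟨c, hcA, rfl⟩))))).1 rfl

lemma hasBergeStar_of_subset_insert {c : Fin n} {F : Finset (Finset (Fin n))} {r : Finset (Fin n)}
    (hF : IsBergeStar c F) (hFH : F ⊆ H) (hHF : H ⊆ insert r F) (hH : t ≤ H.card) :
    HasBergeStar t n H := by
  have := (card_le_card hHF).trans (card_insert_le r F)
  exact hasBergeStar_iff.2 ⟨c, F, hFH, by omega, hF⟩

lemma hasBergeStar_insert_Ht_of_mem_smallVertices (ht : 5 ≤ t) (hn : t ≤ n) {e : Finset (Fin n)}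
    (he : e ∉ Ht t n) (h2e : 2 ≤ e.card) {c : Fin n} (hce : c ∈ e) (hcA : c ∈ smallVertices t n) :
    HasBergeStar t n (insert e (Ht t n)) := by
  have hA := card_smallVertices (t := t) (n := n) (by omega)
  have hpair : IsBergeStar c {e, smallVertices t n} :=
    isBergeStar_pair (fun h => he (h ▸ mem_Ht.2 (Or.inl rfl))) hce hcA h2e (by omega)
  have hstar := hpair.insert_univ_union_image_erase (notMem_erase c _) (by
    rw [Fintype.card_fin, card_erase_of_mem hcA]
    have := card_le_two (a := e) (b := smallVertices t n)
    omega)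
  refine hasBergeStar_of_subset_insert (r := univ.erase c) hstar ?_ ?_
    (by rw [card_insert_of_notMem he, card_Ht (by omega) hn]; omega)
  · intro s hs
    simp only [mem_insert, mem_union, mem_singleton, mem_image, mem_erase, mem_Ht] at hs ⊢
    rcases hs with rfl | (rfl | rfl) | ⟨i, ⟨-, hi⟩, rfl⟩
    exacts [Or.inr (Or.inr (Or.inl rfl)), Or.inl rfl, Or.inr (Or.inl rfl),
      Or.inr (Or.inr (Or.inr ⟨i, hi, rfl⟩))]
  · intro s hs
    simp only [mem_insert, mem_union, mem_singleton, mem_image, mem_erase, mem_Ht] at hs ⊢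
    rcases hs with rfl | rfl | rfl | ⟨i, hi, rfl⟩
    exacts [Or.inr (Or.inr (Or.inl (Or.inl rfl))), Or.inr (Or.inr (Or.inl (Or.inr rfl))),
      Or.inr (Or.inl rfl), (eq_or_ne i c).imp (congrArg _) fun hic =>
        Or.inr (Or.inr ⟨i, ⟨hic, hi⟩, rfl⟩)]

lemma hasBergeStar_insert_Ht_of_forall_notMem (ht : 5 ≤ t) (hn : t ≤ n) {e : Finset (Fin n)}
    (he : e ∉ Ht t n) (h2e : 2 ≤ e.card) (heA : ∀ c ∈ e, c ∉ smallVertices t n) :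
    HasBergeStar t n (insert e (Ht t n)) := by
  have hA := card_smallVertices (t := t) (n := n) (by omega)
  obtain ⟨c, hce⟩ := card_pos.1 (by omega : 0 < e.card)
  have hsingle : IsBergeStar c {e} := by
    simpa using (isBergeStar_empty c).insert_of_card_lt hce
      (by rw [insert_empty, card_singleton]; omega)
  have hstar := hsingle.insert_univ_union_image_erase (heA c hce) (by
    rw [Fintype.card_fin, card_singleton]
    omega)
  refine hasBergeStar_of_subset_insert (r := smallVertices t n) hstar ?_ ?_
    (by rw [card_insert_of_notMem he, card_Ht (by omega) hn]; omega)
  · intro s hs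
    simp only [mem_insert, mem_union, mem_singleton, mem_image, mem_Ht] at hs ⊢
    tauto
  · intro s hs
    simp only [mem_insert, mem_union, mem_singleton, mem_image, mem_Ht] at hs ⊢
    tauto

lemma starSat_Ht (ht : 5 ≤ t) (hn : t ≤ n) : StarSat t n (Ht t n) := by
  refine ⟨fun s => two_le_card_of_mem_Ht ht hn, not_hasBergeStar_Ht (by omega) hn,
    fun e he h2e => ?_⟩
  by_cases h : ∃ c ∈ e, c ∈ smallVertices t n
  · obtain ⟨c, hce, hcA⟩ := h
    exact hasBergeStar_insert_Ht_of_mem_smallVertices ht hn he h2e hce hcA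
  · push Not at h
    exact hasBergeStar_insert_Ht_of_forall_notMem ht hn he h2e h

end Saturation

/-- For `t ≥ 5` and `n ≥ t`, `sat(n, B(S_t)) = t - 1 = |E(S_t)|`: the minimum number of
hyperedges of a Berge-`S_t` saturated hypergraph on `n` vertices is `t - 1`. -/
theorem sat_star (t n : ℕ) (ht : 5 ≤ t) (hn : t ≤ n) :
    IsLeast {m : ℕ | ∃ H : Finset (Finset (Fin n)), StarSat t n H ∧ H.card = m} (t - 1) := by
  refine ⟨⟨Ht t n, starSat_Ht ht hn, card_Ht (by omega) hn⟩, ?_⟩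
  rintro m ⟨H, hH, rfl⟩
  exact hH.le_card ht hn
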